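/- arXiv:1604.04402 — 4 statements merged into one kernel-verified Lean document; each statement's English description precedes it below -/
import Mathlib

section
/- On an even-sized grid, the configurations of minimal energy E among all configurations with exactly k ones are exactly the archipelagos with k ones; moreover, every such minimal-energy configuration is a q-archipelago where q is the minority state (q = 1 if k ≤ N_L/2, q = 0 if k ≥ N_L/2). -/
open scoped Classical

/-- 4-neighbour adjacency on the torus. -/
def adjT {n₁ n₂ : ℕ} (p q : ZMod n₁ × ZMod n₂) : Prop :=
  q = p + (1, 0) ∨ q = p + (0, 1) ∨ q = p + (-1, 0) ∨ q = p + (0, -1)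

/-- `x` is a `q`-archipelago: no two adjacent cells are both in state `q`. -/
def qArch {n₁ n₂ : ℕ} (q : Bool) (x : ZMod n₁ × ZMod n₂ → Bool) : Prop :=
  ∀ p p' : ZMod n₁ × ZMod n₂, adjT p p' → ¬(x p = q ∧ x p' = q)

/-- Energy: number of (ordered) adjacent pairs of cells in equal states. -/
noncomputable def En {n₁ n₂ : ℕ} [NeZero n₁] [NeZero n₂]
    (x : ZMod n₁ × ZMod n₂ → Bool) : ℕ :=
  ∑ u ∈ Finset.univ.filter
      (fun u : (ZMod n₁ × ZMod n₂) × (ZMod n₁ × ZMod n₂) => adjT u.1 u.2),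
    if x u.1 = x u.2 then 1 else 0

/-- Number of cells in state 1. -/
noncomputable def ones {n₁ n₂ : ℕ} [NeZero n₁] [NeZero n₂]
    (x : ZMod n₁ × ZMod n₂ → Bool) : ℕ :=
  (Finset.univ.filter (fun c => x c = true)).card

/-!
Let `B_q(x)` (`boundary`) count the ordered adjacent pairs going from a cell in state `q` to a cell
not in state `q`. Every adjacent pair is monochromatic or crosses in one of the two directions, so
by symmetry `E(x) + 2 B_q(x)` is the number of adjacent pairs, independently of `x`. The torus is
`d`-regular, hence `B_q(x) ≤ d · #{x = q}`, with equality exactly for `q`-archipelagos. Thus among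
configurations with a fixed number of cells in state `q`, the minimisers of `E` are exactly the
`q`-archipelagos as soon as one exists, and on an even torus the cells of one colour of the
checkerboard provide a `q`-archipelago with `m` cells in state `q` for every `m ≤ N/2`.
-/

open Finset

section RegularRelation

variable {V : Type*} [Fintype V] {r : V → V → Prop}

noncomputable def energy (r : V → V → Prop) (x : V → Bool) : ℕ :=
  ∑ u ∈ univ.filter (fun u : V × V => r u.1 u.2), if x u.1 = x u.2 then 1 else 0

noncomputable def boundary (r : V → V → Prop) (q : Bool) (x : V → Bool) : ℕ :=
  #{u : V × V | r u.1 u.2 ∧ x u.1 = q ∧ x u.2 ≠ q}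

def IsArchipelago (r : V → V → Prop) (q : Bool) (x : V → Bool) : Prop :=
  ∀ p p', r p p' → ¬(x p = q ∧ x p' = q)

lemma boundary_eq_card_entering [Std.Symm r] (q : Bool) (x : V → Bool) :
    boundary r q x = #{u : V × V | r u.1 u.2 ∧ x u.1 ≠ q ∧ x u.2 = q} :=
  card_equiv (Equiv.prodComm V V) fun u => by
    simp only [mem_filter, mem_univ, true_and, Equiv.prodComm_apply, Prod.fst_swap,
      Prod.snd_swap]
    exact ⟨fun ⟨h, h₁, h₂⟩ => ⟨symm h, h₂, h₁⟩, fun ⟨h, h₁, h₂⟩ => ⟨symm h, h₂, h₁⟩⟩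

lemma energy_add_two_mul_boundary [Std.Symm r] (q : Bool) (x : V → Bool) :
    energy r x + 2 * boundary r q x = #{u : V × V | r u.1 u.2} := by
  rw [two_mul]
  nth_rw 2 [boundary_eq_card_entering]
  simp only [energy, boundary, card_filter, sum_filter, ← sum_add_distrib]
  refine sum_congr rfl fun u _ => ?_
  by_cases hu : r u.1 u.2
  · cases x u.1 <;> cases x u.2 <;> cases q <;> simp [hu]
  · simp [hu]

lemma boundary_eq_sum (q : Bool) (x : V → Bool) :
    boundary r q x = ∑ p with x p = q, #{v | r p v ∧ x v ≠ q} := by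
  simp only [boundary, card_filter, Fintype.sum_prod_type, sum_filter]
  refine sum_congr rfl fun p _ => ?_
  by_cases hp : x p = q <;> simp [hp]

lemma exists_isArchipelago_card_eq {S : Finset V} (hS : ∀ p ∈ S, ∀ p' ∈ S, ¬r p p')
    (q : Bool) {m : ℕ} (hm : m ≤ #S) :
    ∃ x : V → Bool, #{p | x p = q} = m ∧ IsArchipelago r q x := by
  obtain ⟨T, hTS, rfl⟩ := exists_subset_card_eq hm
  have hx (p : V) : (if p ∈ T then q else !q) = q ↔ p ∈ T := by
    by_cases hp : p ∈ T <;> simp [hp]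
  refine ⟨fun p => if p ∈ T then q else !q, by simp only [hx, filter_mem_eq_inter, univ_inter], ?_⟩
  rintro p p' hpp' ⟨hp, hp'⟩
  exact hS p (hTS ((hx p).1 hp)) p' (hTS ((hx p').1 hp')) hpp'

variable {d : ℕ} (hreg : ∀ p, #{v | r p v} = d)
include hreg

lemma card_neighbor_ne_le (p : V) (q : Bool) (x : V → Bool) : #{v | r p v ∧ x v ≠ q} ≤ d := by
  rw [← filter_filter, ← hreg p]
  exact card_filter_le _ _

lemma card_neighbor_ne_eq_iff (p : V) (q : Bool) (x : V → Bool) :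
    #{v | r p v ∧ x v ≠ q} = d ↔ ∀ v, r p v → x v ≠ q := by
  rw [← filter_filter, ← hreg p, card_filter_eq_iff]
  simp

lemma boundary_le (q : Bool) (x : V → Bool) : boundary r q x ≤ #{p | x p = q} * d := by
  rw [boundary_eq_sum, ← smul_eq_mul, ← sum_const]
  exact sum_le_sum fun p _ => card_neighbor_ne_le hreg p q x

lemma boundary_eq_iff (q : Bool) (x : V → Bool) :
    boundary r q x = #{p | x p = q} * d ↔ IsArchipelago r q x := by
  rw [boundary_eq_sum, ← smul_eq_mul, ← sum_const,
    sum_eq_sum_iff_of_le fun p _ => card_neighbor_ne_le hreg p q x]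
  simp only [mem_filter, mem_univ, true_and, card_neighbor_ne_eq_iff hreg, IsArchipelago]
  grind

lemma energy_le_of_isArchipelago [Std.Symm r] {q : Bool} {x y : V → Bool}
    (hx : IsArchipelago r q x) (hxy : #{p | x p = q} = #{p | y p = q}) :
    energy r x ≤ energy r y := by
  have hbx := (boundary_eq_iff hreg q x).2 hx
  have hby := boundary_le hreg q y
  have ex := energy_add_two_mul_boundary (r := r) q x
  have ey := energy_add_two_mul_boundary (r := r) q y
  rw [hxy] at hbx
  omega

lemma isArchipelago_of_energy_le [Std.Symm r] {q : Bool} {x z : V → Bool}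
    (hz : IsArchipelago r q z) (hxz : #{p | x p = q} = #{p | z p = q})
    (hle : energy r x ≤ energy r z) : IsArchipelago r q x := by
  have hbz := (boundary_eq_iff hreg q z).2 hz
  have hbx := boundary_le hreg q x
  have ex := energy_add_two_mul_boundary (r := r) q x
  have ez := energy_add_two_mul_boundary (r := r) q z
  rw [← hxz] at hbz
  exact (boundary_eq_iff hreg q x).1 (by omega)

end RegularRelation

section Torus

variable {n₁ n₂ : ℕ}

instance : Std.Symm (adjT (n₁ := n₁) (n₂ := n₂)) :=
  ⟨fun p q h => by rcases h with rfl | rfl | rfl | rfl <;> simp [adjT, add_assoc]⟩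

lemma adjT_iff_adjT_zero_sub {p v : ZMod n₁ × ZMod n₂} : adjT p v ↔ adjT 0 (v - p) := by
  simp only [adjT, zero_add, sub_eq_iff_eq_add']

def parity (h₁ : Even n₁) (h₂ : Even n₂) (p : ZMod n₁ × ZMod n₂) : ZMod 2 :=
  ZMod.castHom h₁.two_dvd (ZMod 2) p.1 + ZMod.castHom h₂.two_dvd (ZMod 2) p.2

lemma parity_of_adjT (h₁ : Even n₁) (h₂ : Even n₂) {p v : ZMod n₁ × ZMod n₂} (h : adjT p v) :
    parity h₁ h₂ v = parity h₁ h₂ p + 1 := by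
  have : (-1 : ZMod 2) = 1 := by decide
  rcases h with rfl | rfl | rfl | rfl <;>
    simp only [parity, Prod.fst_add, Prod.snd_add, map_add, map_one, map_neg, map_zero, this] <;>
    ring

variable [NeZero n₁] [NeZero n₂]

lemma card_adjT (p : ZMod n₁ × ZMod n₂) :
    #{v | adjT p v} = #{v | adjT (0 : ZMod n₁ × ZMod n₂) v} :=
  card_equiv (Equiv.subRight p) fun _ => by
    simpa only [mem_filter, mem_univ, true_and, Equiv.subRight_apply] using adjT_iff_adjT_zero_sub

lemma card_false_add_ones (x : ZMod n₁ × ZMod n₂ → Bool) :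
    #{p | x p = false} + ones x = n₁ * n₂ := by
  have := card_filter_add_card_filter_not (s := univ) (fun p => x p = false)
  simp only [Bool.not_eq_false, card_univ, Fintype.card_prod, ZMod.card] at this
  exact this

lemma card_eq_of_ones_eq {x y : ZMod n₁ × ZMod n₂ → Bool} (h : ones x = ones y) (q : Bool) :
    #{p | x p = q} = #{p | y p = q} := by
  cases q
  · have := card_false_add_ones x
    have := card_false_add_ones y
    omega
  · exact h

lemma en_le_of_qArch {q : Bool} {x y : ZMod n₁ × ZMod n₂ → Bool} (hx : qArch q x)
    (h : ones x = ones y) : En x ≤ En y :=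
  energy_le_of_isArchipelago card_adjT hx (card_eq_of_ones_eq h q)

lemma qArch_of_en_le {q : Bool} {x z : ZMod n₁ × ZMod n₂ → Bool} (hz : qArch q z)
    (h : ones x = ones z) (hle : En x ≤ En z) : qArch q x :=
  isArchipelago_of_energy_le card_adjT hz (card_eq_of_ones_eq h q) hle

lemma two_mul_card_parity_eq_zero (h₁ : Even n₁) (h₂ : Even n₂) :
    2 * #{p | parity h₁ h₂ p = 0} = n₁ * n₂ := by
  have hshift : #{p | parity h₁ h₂ p = 0} = #{p | ¬parity h₁ h₂ p = 0} :=
    card_equiv (Equiv.addRight (1, 0)) fun p => by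
      simp only [mem_filter, mem_univ, true_and, Equiv.coe_addRight,
        parity_of_adjT h₁ h₂ (Or.inl rfl : adjT p (p + (1, 0)))]
      generalize parity h₁ h₂ p = a
      revert a
      decide
  have := card_filter_add_card_filter_not (s := univ) (fun p => parity h₁ h₂ p = 0)
  rw [card_univ, Fintype.card_prod, ZMod.card, ZMod.card] at this
  omega

lemma exists_qArch (h₁ : Even n₁) (h₂ : Even n₂) (q : Bool) {m : ℕ} (hm : 2 * m ≤ n₁ * n₂) :
    ∃ x : ZMod n₁ × ZMod n₂ → Bool, #{p | x p = q} = m ∧ qArch q x := by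
  refine exists_isArchipelago_card_eq (S := {p | parity h₁ h₂ p = 0}) ?_ q ?_
  · intro p hp p' hp' hpp'
    have h := parity_of_adjT h₁ h₂ hpp'
    simp only [mem_filter, mem_univ, true_and] at hp hp'
    rw [hp, hp', zero_add] at h
    exact zero_ne_one h
  · have := two_mul_card_parity_eq_zero h₁ h₂
    omega

lemma exists_ones_eq_qArch_true (h₁ : Even n₁) (h₂ : Even n₂) {k : ℕ} (h : 2 * k ≤ n₁ * n₂) :
    ∃ x : ZMod n₁ × ZMod n₂ → Bool, ones x = k ∧ qArch true x :=
  exists_qArch h₁ h₂ true h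

lemma exists_ones_eq_qArch_false (h₁ : Even n₁) (h₂ : Even n₂) {k : ℕ} (hk : k ≤ n₁ * n₂)
    (h : n₁ * n₂ ≤ 2 * k) : ∃ x : ZMod n₁ × ZMod n₂ → Bool, ones x = k ∧ qArch false x := by
  obtain ⟨x, hx, hxa⟩ := exists_qArch h₁ h₂ false (m := n₁ * n₂ - k) (by omega)
  exact ⟨x, by have := card_false_add_ones x; omega, hxa⟩

end Torus

/-- on an even-sized grid, within configurations with exactly `k`
ones (a nonempty condition for every `k ≤ N_L`), the minimal-energy
configurations are exactly the archipelagos, and every minimal-energy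
configuration is a `q`-archipelago for the minority state `q`. -/
theorem minimal_energy_iff_archipelago
    (n₁ n₂ : ℕ) [NeZero n₁] [NeZero n₂] (h₁ : Even n₁) (h₂ : Even n₂)
    (k : ℕ) (hk : k ≤ n₁ * n₂) :
    (∃ x : ZMod n₁ × ZMod n₂ → Bool, ones x = k ∧ (qArch true x ∨ qArch false x)) ∧
    (∀ x : ZMod n₁ × ZMod n₂ → Bool, ones x = k →
      (((∀ y : ZMod n₁ × ZMod n₂ → Bool, ones y = k → En x ≤ En y) ↔
          (qArch true x ∨ qArch false x)) ∧
        ((∀ y : ZMod n₁ × ZMod n₂ → Bool, ones y = k → En x ≤ En y) →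
          (2 * k ≤ n₁ * n₂ → qArch true x) ∧ (n₁ * n₂ ≤ 2 * k → qArch false x)))) := by
  have exists_true (h : 2 * k ≤ n₁ * n₂) := exists_ones_eq_qArch_true h₁ h₂ h
  have exists_false (h : n₁ * n₂ ≤ 2 * k) := exists_ones_eq_qArch_false h₁ h₂ hk h
  have qArch_of_min (x : ZMod n₁ × ZMod n₂ → Bool) (hx : ones x = k)
      (hmin : ∀ y : ZMod n₁ × ZMod n₂ → Bool, ones y = k → En x ≤ En y) :
      (2 * k ≤ n₁ * n₂ → qArch true x) ∧ (n₁ * n₂ ≤ 2 * k → qArch false x) := by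
    constructor
    · intro h
      obtain ⟨z, hz, hza⟩ := exists_true h
      exact qArch_of_en_le hza (hx.trans hz.symm) (hmin z hz)
    · intro h
      obtain ⟨z, hz, hza⟩ := exists_false h
      exact qArch_of_en_le hza (hx.trans hz.symm) (hmin z hz)
  refine ⟨?_, fun x hx => ⟨⟨fun hmin => ?_, fun harch y hy => ?_⟩, qArch_of_min x hx⟩⟩
  · rcases le_total (2 * k) (n₁ * n₂) with h | h
    · exact (exists_true h).imp fun x hx => ⟨hx.1, Or.inl hx.2⟩
    · exact (exists_false h).imp fun x hx => ⟨hx.1, Or.inr hx.2⟩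
  · rcases le_total (2 * k) (n₁ * n₂) with h | h
    · exact Or.inl ((qArch_of_min x hx hmin).1 h)
    · exact Or.inr ((qArch_of_min x hx hmin).2 h)
  · rcases harch with harch | harch <;> exact en_le_of_qArch harch (hx.trans hy.symm)
end

section
/- Let x be a configuration on a torus containing at least one 1 and at least one empty 2×2 window (containing no 1s). Then there exists a 2×2 window that contains either exactly one 1, or two adjacent 1s and two adjacent 0s. -/
/-- Number of 1s in the 2×2 window at position `c`. -/
def wcount {n₁ n₂ : ℕ} (x : ZMod n₁ × ZMod n₂ → Bool) (c : ZMod n₁ × ZMod n₂) : ℕ :=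
  (if x c then 1 else 0) + (if x (c + (1, 0)) then 1 else 0) +
    (if x (c + (0, 1)) then 1 else 0) + (if x (c + (1, 1)) then 1 else 0)

/-- The 2×2 window at `c` is checkered: equal states on each diagonal,
different states on adjacent cells. -/
def Checkered {n₁ n₂ : ℕ} (x : ZMod n₁ × ZMod n₂ → Bool) (c : ZMod n₁ × ZMod n₂) : Prop :=
  x c = x (c + (1, 1)) ∧ x (c + (1, 0)) = x (c + (0, 1)) ∧ x c ≠ x (c + (1, 0))

/-! If no window is good, a window next to an empty one shares a column or a row of zeros with
it, and a window whose ones all lie in one column or one row is empty or good. So emptiness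
propagates by `(1, 0)` and `(0, 1)`, which generate the torus as a monoid, and every window is
empty, contradicting the presence of a one. -/

theorem AddSubmonoid.forall_of_closure_eq_top {M : Type*} [AddGroup M] {s : Set M}
    (hs : AddSubmonoid.closure s = ⊤) {P : M → Prop} (hstep : ∀ c, P c → ∀ g ∈ s, P (c + g))
    {c₀ : M} (h₀ : P c₀) (c : M) : P c := by
  have key : ∀ m ∈ AddSubmonoid.closure s, P (c₀ + m) := fun m hm ↦ by
    induction hm using AddSubmonoid.closure_induction_right with
    | zero => simpa using h₀
    | add_right m _ g hg ih => simpa only [add_assoc] using hstep _ ih g hg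
  simpa using key (-c₀ + c) (hs ▸ AddSubmonoid.mem_top _)

theorem ZMod.addSubmonoid_closure_unitVectors_eq_top (n₁ n₂ : ℕ) [NeZero n₁] [NeZero n₂] :
    AddSubmonoid.closure {((1, 0) : ZMod n₁ × ZMod n₂), (0, 1)} = ⊤ := by
  refine eq_top_iff.mpr fun ⟨a, b⟩ _ ↦ ?_
  have hab : ((a, b) : ZMod n₁ × ZMod n₂) = a.val • (1, 0) + b.val • (0, 1) := by
    ext <;> simp
  rw [hab]
  exact add_mem (nsmul_mem (AddSubmonoid.subset_closure (by simp)) _)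
    (nsmul_mem (AddSubmonoid.subset_closure (by simp)) _)

section Windows

variable {n₁ n₂ : ℕ} {x : ZMod n₁ × ZMod n₂ → Bool} {c : ZMod n₁ × ZMod n₂}

def GoodWindow (x : ZMod n₁ × ZMod n₂ → Bool) (c : ZMod n₁ × ZMod n₂) : Prop :=
  wcount x c = 1 ∨ (wcount x c = 2 ∧ ¬Checkered x c)

theorem wcount_eq_zero_iff : wcount x c = 0 ↔
    x c = false ∧ x (c + (1, 0)) = false ∧ x (c + (0, 1)) = false ∧ x (c + (1, 1)) = false := by
  unfold wcount
  split_ifs <;> simp_all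

theorem wcount_eq_zero_or_goodWindow_of_left_column (h0 : x c = false)
    (h01 : x (c + (0, 1)) = false) : wcount x c = 0 ∨ GoodWindow x c := by
  unfold GoodWindow wcount Checkered
  cases h10 : x (c + (1, 0)) <;> cases h11 : x (c + (1, 1)) <;> simp_all

theorem wcount_eq_zero_or_goodWindow_of_bottom_row (h0 : x c = false)
    (h10 : x (c + (1, 0)) = false) : wcount x c = 0 ∨ GoodWindow x c := by
  unfold GoodWindow wcount Checkered
  cases h01 : x (c + (0, 1)) <;> cases h11 : x (c + (1, 1)) <;> simp_all

theorem wcount_add_unitVector_eq_zero (hgood : ∀ c, ¬GoodWindow x c) (h : wcount x c = 0)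
    {g : ZMod n₁ × ZMod n₂} (hg : g ∈ ({(1, 0), (0, 1)} : Set (ZMod n₁ × ZMod n₂))) :
    wcount x (c + g) = 0 := by
  obtain ⟨h00, h10, h01, h11⟩ := wcount_eq_zero_iff.mp h
  have hcorner : c + (1, 1) = c + (1, 0) + (0, 1) ∧ c + (1, 1) = c + (0, 1) + (1, 0) := by
    simp [add_assoc]
  rcases hg with rfl | rfl
  · exact (wcount_eq_zero_or_goodWindow_of_left_column h10 (hcorner.1 ▸ h11)).resolve_right
      (hgood _)
  · exact (wcount_eq_zero_or_goodWindow_of_bottom_row h01 (hcorner.2 ▸ h11)).resolve_right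
      (hgood _)

end Windows

theorem empty_window_gives_good_window_general
    (n₁ n₂ : ℕ) [NeZero n₁] [NeZero n₂]
    (x : ZMod n₁ × ZMod n₂ → Bool)
    (hone : ∃ c : ZMod n₁ × ZMod n₂, x c = true)
    (hempty : ∃ c : ZMod n₁ × ZMod n₂, wcount x c = 0) :
    ∃ c : ZMod n₁ × ZMod n₂,
      wcount x c = 1 ∨ (wcount x c = 2 ∧ ¬Checkered x c) := by
  by_contra hno
  have hgood : ∀ c, ¬GoodWindow x c := fun c hc ↦ hno ⟨c, hc⟩
  obtain ⟨c₀, hc₀⟩ := hempty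
  obtain ⟨c, hc⟩ := hone
  have hall : ∀ c, wcount x c = 0 :=
    AddSubmonoid.forall_of_closure_eq_top (ZMod.addSubmonoid_closure_unitVectors_eq_top n₁ n₂)
      (fun _ h _ hg ↦ wcount_add_unitVector_eq_zero hgood h hg) hc₀
  simp [(wcount_eq_zero_iff.mp (hall c)).1] at hc

/-- if `x` contains at least one 1 and at least one empty 2×2
window, then some 2×2 window contains either exactly one 1, or two adjacent 1s
and two adjacent 0s (i.e., two 1s not placed diagonally). -/
theorem empty_window_gives_good_window
    (n₁ n₂ : ℕ) [NeZero n₁] [NeZero n₂] (h₁ : 2 ≤ n₁) (h₂ : 2 ≤ n₂)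
    (x : ZMod n₁ × ZMod n₂ → Bool)
    (hone : ∃ c : ZMod n₁ × ZMod n₂, x c = true)
    (hempty : ∃ c : ZMod n₁ × ZMod n₂, wcount x c = 0) :
    ∃ c : ZMod n₁ × ZMod n₂,
      wcount x c = 1 ∨ (wcount x c = 2 ∧ ¬Checkered x c) :=
  empty_window_gives_good_window_general n₁ n₂ x hone hempty
end

section
/- The set of sub-checkerboards C is absorbing for the checkerboard-synchronisation IPS Φ_C: for every x ∈ C and every interacting pair u (adjacent or diagonal), Φ_C(x,u) ∈ C. -/
open scoped Classical

/-- 4-neighbour adjacency on the torus. -/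
def adj4 {n₁ n₂ : ℕ} (p q : ZMod n₁ × ZMod n₂) : Prop :=
  q = p + (1, 0) ∨ q = p + (0, 1) ∨ q = p + (-1, 0) ∨ q = p + (0, -1)

/-- Diagonal adjacency on the torus. -/
def diag4 {n₁ n₂ : ℕ} (p q : ZMod n₁ × ZMod n₂) : Prop :=
  q = p + (1, 1) ∨ q = p + (1, -1) ∨ q = p + (-1, 1) ∨ q = p + (-1, -1)

/-- A cell is isolated if none of its 4-neighbours shares its state. -/
def isolated {n₁ n₂ : ℕ} (x : ZMod n₁ × ZMod n₂ → Bool) (p : ZMod n₁ × ZMod n₂) : Prop :=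
  ∀ q : ZMod n₁ × ZMod n₂, adj4 p q → x q ≠ x p

/-- `τ(x,(i,j))`: exchange the states of cells `i` and `j`. -/
def swap {n₁ n₂ : ℕ} (x : ZMod n₁ × ZMod n₂ → Bool) (i j : ZMod n₁ × ZMod n₂) :
    ZMod n₁ × ZMod n₂ → Bool :=
  fun c => if c = i then x j else if c = j then x i else x c

/-- The checkerboard-synchronisation IPS rule `Φ_C`: on an adjacent pair, swap
iff both cells are non-isolated; on a diagonal pair, always swap. -/
noncomputable def PhiC {n₁ n₂ : ℕ} (x : ZMod n₁ × ZMod n₂ → Bool)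
    (i j : ZMod n₁ × ZMod n₂) : ZMod n₁ × ZMod n₂ → Bool :=
  if adj4 i j then
    (if ¬isolated x i ∧ ¬isolated x j then swap x i j else x)
  else if diag4 i j then swap x i j else x

/-- Membership in `C = C_e^0 ∪ C_e^1 ∪ C_o^0 ∪ C_o^1`: some state appears only
on cells of one parity (a "sub-checkerboard"). -/
def InC {n₁ n₂ : ℕ} (x : ZMod n₁ × ZMod n₂ → Bool) : Prop :=
  (∀ c : ZMod n₁ × ZMod n₂, x c = true → Even (c.1.val + c.2.val)) ∨
  (∀ c : ZMod n₁ × ZMod n₂, x c = true → ¬Even (c.1.val + c.2.val)) ∨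
  (∀ c : ZMod n₁ × ZMod n₂, x c = false → Even (c.1.val + c.2.val)) ∨
  (∀ c : ZMod n₁ × ZMod n₂, x c = false → ¬Even (c.1.val + c.2.val))

/-!
Colour the torus by `c ↦ c.1 + c.2 mod 2`; on an even torus this is additive, so a
4-neighbour step flips the colour and a diagonal step keeps it. A configuration in `C`
has a state `b` living on a single colour, so every `b`-cell is isolated. Two adjacent
non-isolated cells therefore both carry `¬b`, and swapping them does nothing; a diagonal
swap exchanges two cells of the same colour and so keeps the `b`-cells on that colour.
-/

lemma ZMod.natCast_val_eq_cast_two {n : ℕ} (a : ZMod n) : (a.val : ZMod 2) = a.cast := by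
  cases n with
  | zero => exact ZMod.natAbs_mod_two a
  | succ n => exact ZMod.natCast_val a

section

variable {n₁ n₂ : ℕ}

def cellParity (c : ZMod n₁ × ZMod n₂) : ZMod 2 :=
  (c.1.val + c.2.val : ℕ)

lemma even_iff_cellParity_eq_zero (c : ZMod n₁ × ZMod n₂) :
    Even (c.1.val + c.2.val) ↔ cellParity c = 0 :=
  ZMod.natCast_eq_zero_iff_even.symm

lemma not_even_iff_cellParity_eq_one (c : ZMod n₁ × ZMod n₂) :
    ¬Even (c.1.val + c.2.val) ↔ cellParity c = 1 := by
  rw [Nat.not_even_iff_odd, cellParity, ZMod.natCast_eq_one_iff_odd]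

lemma inC_iff (x : ZMod n₁ × ZMod n₂ → Bool) :
    InC x ↔ ∃ b : Bool, ∃ r : ZMod 2, ∀ c, x c = b → cellParity c = r := by
  -- `↓` rewrites each `¬Even` before simp reaches the `Even` inside it.
  simp only [InC, ↓not_even_iff_cellParity_eq_one, even_iff_cellParity_eq_zero]
  constructor
  · rintro (H | H | H | H)
    exacts [⟨true, 0, H⟩, ⟨true, 1, H⟩, ⟨false, 0, H⟩, ⟨false, 1, H⟩]
  · rintro ⟨_ | _, r, H⟩ <;> fin_cases r
    exacts [Or.inr (Or.inr (Or.inl H)), Or.inr (Or.inr (Or.inr H)), Or.inl H, Or.inr (Or.inl H)]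

lemma cellParity_eq_castHom (h₁ : 2 ∣ n₁) (h₂ : 2 ∣ n₂) (c : ZMod n₁ × ZMod n₂) :
    cellParity c = ZMod.castHom h₁ (ZMod 2) c.1 + ZMod.castHom h₂ (ZMod 2) c.2 := by
  simp only [cellParity, Nat.cast_add, ZMod.castHom_apply, ZMod.natCast_val_eq_cast_two]

lemma cellParity_of_adj4 (h₁ : 2 ∣ n₁) (h₂ : 2 ∣ n₂) {p q : ZMod n₁ × ZMod n₂}
    (h : adj4 p q) : cellParity q = cellParity p + 1 := by
  rcases h with rfl | rfl | rfl | rfl <;>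
    simp only [cellParity_eq_castHom h₁ h₂, Prod.fst_add, Prod.snd_add, map_add, map_one,
      map_neg, map_zero, CharTwo.neg_eq] <;> ring

lemma cellParity_of_diag4 (h₁ : 2 ∣ n₁) (h₂ : 2 ∣ n₂) {p q : ZMod n₁ × ZMod n₂}
    (h : diag4 p q) : cellParity q = cellParity p := by
  rcases h with rfl | rfl | rfl | rfl <;>
    simp only [cellParity_eq_castHom h₁ h₂, Prod.fst_add, Prod.snd_add, map_add, map_one,
      map_neg, CharTwo.neg_eq] <;> linear_combination CharTwo.two_eq_zero (R := ZMod 2)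

lemma isolated_of_cellParity_eq (h₁ : 2 ∣ n₁) (h₂ : 2 ∣ n₂)
    {x : ZMod n₁ × ZMod n₂ → Bool} {b : Bool} {r : ZMod 2}
    (H : ∀ c, x c = b → cellParity c = r) {p : ZMod n₁ × ZMod n₂} (hp : x p = b) :
    isolated x p := by
  intro q hpq hq
  have := cellParity_of_adj4 h₁ h₂ hpq
  rw [H q (hq.trans hp), H p hp] at this
  simp at this

lemma eq_of_not_isolated_of_inC (h₁ : 2 ∣ n₁) (h₂ : 2 ∣ n₂)
    {x : ZMod n₁ × ZMod n₂ → Bool} (hx : InC x) {p q : ZMod n₁ × ZMod n₂}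
    (hp : ¬isolated x p) (hq : ¬isolated x q) : x p = x q := by
  obtain ⟨b, r, H⟩ := (inC_iff x).1 hx
  have hpb : x p ≠ b := fun h => hp (isolated_of_cellParity_eq h₁ h₂ H h)
  have hqb : x q ≠ b := fun h => hq (isolated_of_cellParity_eq h₁ h₂ H h)
  cases b <;> simp_all

lemma swap_eq_self {x : ZMod n₁ × ZMod n₂ → Bool} {i j : ZMod n₁ × ZMod n₂}
    (h : x i = x j) : swap x i j = x := by
  funext c
  unfold swap
  split_ifs with hi hj
  · rw [hi, h]
  · rw [hj, h]
  · rfl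

lemma inC_swap {x : ZMod n₁ × ZMod n₂ → Bool} (hx : InC x)
    {i j : ZMod n₁ × ZMod n₂} (hij : cellParity i = cellParity j) : InC (swap x i j) := by
  obtain ⟨b, r, H⟩ := (inC_iff x).1 hx
  refine (inC_iff _).2 ⟨b, r, fun c hc => ?_⟩
  unfold swap at hc
  split_ifs at hc with hi hj
  · rw [hi, hij, H j hc]
  · rw [hj, ← hij, H i hc]
  · exact H c hc

end

theorem C_absorbing_general
    (n₁ n₂ : ℕ) (h₁ : Even n₁) (h₂ : Even n₂)
    (x : ZMod n₁ × ZMod n₂ → Bool) (hx : InC x)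
    (i j : ZMod n₁ × ZMod n₂) :
    InC (PhiC x i j) := by
  have h₁ := h₁.two_dvd
  have h₂ := h₂.two_dvd
  unfold PhiC
  split_ifs with _ hiso hdiag
  · rwa [swap_eq_self (eq_of_not_isolated_of_inC h₁ h₂ hx hiso.1 hiso.2)]
  · exact hx
  · exact inC_swap hx (cellParity_of_diag4 h₁ h₂ hdiag).symm
  · exact hx

/-- on an even-sized grid, the set `C` of sub-checkerboards is
absorbing for `Φ_C`: for every `x ∈ C` and every interacting pair (adjacent or
diagonal), `Φ_C(x,u) ∈ C`. -/
theorem C_absorbing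
    (n₁ n₂ : ℕ) [NeZero n₁] [NeZero n₂] (h₁ : Even n₁) (h₂ : Even n₂)
    (x : ZMod n₁ × ZMod n₂ → Bool) (hx : InC x)
    (i j : ZMod n₁ × ZMod n₂) (hu : adj4 i j ∨ diag4 i j) :
    InC (PhiC x i j) :=
  C_absorbing_general n₁ n₂ h₁ h₂ x hx i j
end

section
/- The traffic rule F₁₈₄ on Z/nZ is conservative: for every configuration x, the number of 1s in F₁₈₄(x) equals the number of 1s in x. -/
/-!
Rule 184 is a traffic rule: a car (a `1`) at `i` advances to `i + 1` exactly when that cell is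
empty. Hence `F(x)_i = x_i - (outflow at i) + (outflow at i - 1)`, and summing over the cycle the
outflows cancel, since `i ↦ i - 1` permutes `ℤ/nℤ`.
-/

/-- The traffic rule (elementary CA rule 184) on `ℤ/nℤ`:
`F(x)_i = 1` iff (`x_{i-1} = 1` and `x_i = 0`) or (`x_i = 1` and `x_{i+1} = 1`). -/
def F184 {n : ℕ} (x : ZMod n → Bool) : ZMod n → Bool :=
  fun i => (x (i - 1) && !x i) || (x i && x (i + 1))

open Finset

theorem Fintype.sum_eq_sum_of_add_eq_add_comp {α M : Type*} [Fintype α] [AddCancelCommMonoid M]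
    (σ : Equiv.Perm α) {f g φ : α → M} (h : ∀ i, f i + φ i = g i + φ (σ i)) :
    ∑ i, f i = ∑ i, g i := by
  have hsum : ∑ i, (f i + φ i) = ∑ i, (g i + φ (σ i)) := Fintype.sum_congr _ _ h
  rw [sum_add_distrib, sum_add_distrib, Equiv.sum_comp σ φ] at hsum
  exact add_right_cancel hsum

theorem Finset.card_filter_eq_true_eq_sum_toNat {α : Type*} (s : Finset α) (b : α → Bool) :
    (s.filter (fun i => b i = true)).card = ∑ i ∈ s, (b i).toNat := by
  rw [card_filter]
  exact sum_congr rfl fun i _ => by cases b i <;> rfl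

def F184Outflow {n : ℕ} (x : ZMod n → Bool) (i : ZMod n) : Bool :=
  x i && !x (i + 1)

theorem F184_toNat_add_outflow {n : ℕ} (x : ZMod n → Bool) (i : ZMod n) :
    (F184 x i).toNat + (F184Outflow x i).toNat = (x i).toNat + (F184Outflow x (i - 1)).toNat := by
  simp only [F184, F184Outflow, sub_add_cancel]
  cases x (i - 1) <;> cases x i <;> cases x (i + 1) <;> rfl

/-- rule 184 is conservative: the number of 1s is preserved. -/
theorem F184_conservative (n : ℕ) [NeZero n] (x : ZMod n → Bool) :
    (Finset.univ.filter (fun i : ZMod n => F184 x i = true)).card =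
      (Finset.univ.filter (fun i : ZMod n => x i = true)).card := by
  simp only [card_filter_eq_true_eq_sum_toNat]
  exact Fintype.sum_eq_sum_of_add_eq_add_comp (Equiv.subRight 1) (F184_toNat_add_outflow x)
end
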